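/- arXiv:physics/0206017 — 6 statements merged into one kernel-verified Lean document; each statement's English description precedes it below -/
import Mathlib

section
/- Let Σ be a world function on Ω, let P = (P₀,…,Pₙ) and Q = (Q₀,…,Qₙ) be (n+1)-tuples of points of Ω, and let P′ be obtained from P by interchanging two entries P_k and P_l with 0 ≤ k < l ≤ n. Then the scalar Σ-product of nth order multivectors changes sign: (P′.Q) = −(P.Q) for every Q. -/
/-!
Writing `g x j := Σ(x, Q_j) - Σ(x, Q₀)`, the entry `(P₀Pᵢ.Q₀Q_j)` is `g P₀ j - g Pᵢ j`, so `(P.Q)` is,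
up to the sign `(-1)ⁿ`, the determinant of the rows `g Pᵢ - g P₀`. Bordering these rows by a
column of ones turns that into the `(n+1) × (n+1)` determinant with rows `(1, g Pᵢ)`, in which
all points enter symmetrically, and interchanging two points swaps two of its rows.
-/

open Matrix

namespace Matrix

variable {R : Type*} [CommRing R] {n : ℕ}

theorem det_of_sub_zero_eq_det_cons_one (v : Fin (n + 1) → Fin n → R) :
    det (of fun i j : Fin n => v i.succ j - v 0 j) =
      det (of fun i : Fin (n + 1) => (Fin.cons 1 (v i) : Fin (n + 1) → R)) := by
  set B : Matrix (Fin (n + 1)) (Fin (n + 1)) R := of fun i => Fin.cons 1 (v i)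
  -- subtracting row `0` from the others clears the column of ones below its top entry
  set B' : Matrix (Fin (n + 1)) (Fin (n + 1)) R :=
    of fun i j => B i j - (if i = 0 then 0 else 1) * B 0 j
  have hB : det B = det B' :=
    det_eq_of_forall_row_eq_smul_add_const (fun i => if i = 0 then 0 else 1) 0 (by simp)
      fun i j => by simp only [B', of_apply]; split_ifs <;> simp_all
  rw [hB, det_succ_column_zero, Fin.sum_univ_succ]
  simp [B', B, Fin.succ_ne_zero, submatrix]

theorem det_of_zero_sub_eq_neg_one_pow_mul_det_cons_one (v : Fin (n + 1) → Fin n → R) :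
    det (of fun i j : Fin n => v 0 j - v i.succ j) =
      (-1) ^ n * det (of fun i : Fin (n + 1) => (Fin.cons 1 (v i) : Fin (n + 1) → R)) := by
  have hflip : (of fun i j : Fin n => v 0 j - v i.succ j) =
      -of fun i j : Fin n => v i.succ j - v 0 j := by
    ext i j
    simp
  rw [hflip, det_neg, Fintype.card_fin, det_of_sub_zero_eq_det_cons_one]

theorem det_of_zero_sub_comp_swap (v : Fin (n + 1) → Fin n → R) {a b : Fin (n + 1)}
    (hab : a ≠ b) :
    det (of fun i j : Fin n => (v ∘ Equiv.swap a b) 0 j - (v ∘ Equiv.swap a b) i.succ j) =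
      - det (of fun i j : Fin n => v 0 j - v i.succ j) := by
  rw [det_of_zero_sub_eq_neg_one_pow_mul_det_cons_one,
    det_of_zero_sub_eq_neg_one_pow_mul_det_cons_one]
  have hrows : (of fun i => (Fin.cons 1 ((v ∘ Equiv.swap a b) i) : Fin (n + 1) → R)) =
      (of fun i => (Fin.cons 1 (v i) : Fin (n + 1) → R)).submatrix (Equiv.swap a b) id := rfl
  rw [hrows, det_permute, Equiv.Perm.sign_swap hab]
  simp

end Matrix

theorem multivector_product_antisymmetric_in_points_general
    {Ω : Type*}
    (W : Ω → Ω → ℝ)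
    (sp : Ω → Ω → Ω → Ω → ℝ)
    (hsp : ∀ P₀ P₁ Q₀ Q₁, sp P₀ P₁ Q₀ Q₁ =
      W P₀ Q₁ - W P₁ Q₁ - W P₀ Q₀ + W P₁ Q₀)
    (n : ℕ) (P Q : Fin (n + 1) → Ω) (a b : Fin (n + 1)) (hab : a < b) :
    Matrix.det (Matrix.of fun i j : Fin n =>
        sp ((P ∘ Equiv.swap a b) 0) ((P ∘ Equiv.swap a b) i.succ)
           (Q 0) (Q j.succ)) =
      - Matrix.det (Matrix.of fun i j : Fin n =>
        sp (P 0) (P i.succ) (Q 0) (Q j.succ)) := by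
  let g : Ω → Fin n → ℝ := fun x j => W x (Q j.succ) - W x (Q 0)
  have hsp_g : ∀ x y : Ω, ∀ j : Fin n, sp x y (Q 0) (Q j.succ) = g x j - g y j := by
    intro x y j
    rw [hsp]
    ring
  simp only [hsp_g]
  exact det_of_zero_sub_comp_swap (g ∘ P) hab.ne

/-- the scalar Σ-product of nth order multivectors changes sign
when two entries of the skeleton `P` are interchanged. -/
theorem multivector_product_antisymmetric_in_points
    {Ω : Type*} [Nonempty Ω]
    (W : Ω → Ω → ℝ) (hW : ∀ P, W P P = 0)
    (sp : Ω → Ω → Ω → Ω → ℝ)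
    (hsp : ∀ P₀ P₁ Q₀ Q₁, sp P₀ P₁ Q₀ Q₁ =
      W P₀ Q₁ - W P₁ Q₁ - W P₀ Q₀ + W P₁ Q₀)
    (n : ℕ) (P Q : Fin (n + 1) → Ω) (a b : Fin (n + 1)) (hab : a < b) :
    Matrix.det (Matrix.of fun i j : Fin n =>
        sp ((P ∘ Equiv.swap a b) 0) ((P ∘ Equiv.swap a b) i.succ)
           (Q 0) (Q j.succ)) =
      - Matrix.det (Matrix.of fun i j : Fin n =>
        sp (P 0) (P i.succ) (Q 0) (Q j.succ)) :=
  multivector_product_antisymmetric_in_points_general W sp hsp n P Q a b hab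
end

section
/- Let Σ be a world function on Ω and P = (P₀,…,Pₙ) an (n+1)-tuple of points of Ω. Then the quantity Fₙ(P) := det[(P₀Pᵢ.P₀P_k)]_{i,k=1,…,n}, where (P₀Pᵢ.P₀P_k) = Σ(Pᵢ,P₀) + Σ(P₀,P_k) − Σ(Pᵢ,P_k), is invariant under every permutation of the n+1 points P₀, P₁, …, Pₙ. -/
/-!
Every permutation of `P₀, …, Pₙ` is a transposition of `P₀` with some `P_p`, followed by a
permutation fixing `P₀`. The latter permutes rows and columns of the matrix simultaneously.
For the former, the Σ-product is additive in each vector (Chasles), so the new matrix is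
`E G Eᵀ`, where `G` is the old one and `E` expresses the vectors `P_pPᵢ` through the vectors
`P₀Pᵢ`; and `det E = -1`.
-/

open Matrix Equiv

section RebaseMatrix

variable {m R : Type*} [Fintype m] [DecidableEq m] [CommRing R]

/-- For `p = j.succ`, row `i ≠ j` encodes `P_pPᵢ = P₀Pᵢ - P₀P_p` and row `j` encodes
`P_pP₀ = -P₀P_p`. -/
def rebaseMatrix (j : m) : Matrix m m R :=
  (1 : Matrix m m R).updateCol j fun _ => -1

lemma det_rebaseMatrix (j : m) : (rebaseMatrix j : Matrix m m R).det = -1 := by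
  rw [rebaseMatrix, ← cramer_apply, cramer_one]
  rfl

lemma rebaseMatrix_mul_apply (j : m) (M : Matrix m m R) (i k : m) :
    (rebaseMatrix j * M : Matrix m m R) i k = (if i = j then 0 else M i k) - M j k := by
  have hrow : ∀ a, rebaseMatrix j i a =
      (if i = j then 0 else (1 : Matrix m m R) i a) - (1 : Matrix m m R) j a := by
    intro a
    simp only [rebaseMatrix, updateCol_apply, one_apply]
    split_ifs <;> grind
  simp only [mul_apply, hrow, sub_mul, Finset.sum_sub_distrib, ite_mul, zero_mul]
  simp [Finset.sum_ite_irrel, ← mul_apply]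

lemma mul_rebaseMatrix_transpose_apply (j : m) (M : Matrix m m R) (i k : m) :
    (M * (rebaseMatrix j)ᵀ : Matrix m m R) i k = (if k = j then 0 else M i k) - M i j := by
  rw [← transpose_transpose M, ← transpose_mul, transpose_apply, rebaseMatrix_mul_apply]
  rfl

end RebaseMatrix

section SigmaGram

variable {Ω R : Type*} [CommRing R] {n : ℕ}

def sigmaGram (W : Ω → Ω → R) (P : Fin (n + 1) → Ω) : Matrix (Fin n) (Fin n) R :=
  Matrix.of fun i k => W (P i.succ) (P 0) + W (P 0) (P k.succ) - W (P i.succ) (P k.succ)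

variable {W : Ω → Ω → R}

lemma sigmaGram_comp_swap_zero_succ (hW : ∀ x, W x x = 0) (P : Fin (n + 1) → Ω) (j : Fin n) :
    sigmaGram W (P ∘ swap 0 j.succ) = rebaseMatrix j * sigmaGram W P * (rebaseMatrix j)ᵀ := by
  ext i k
  rw [mul_rebaseMatrix_transpose_apply, rebaseMatrix_mul_apply, rebaseMatrix_mul_apply]
  by_cases hi : i = j <;> by_cases hk : k = j <;>
    simp only [sigmaGram, of_apply, Function.comp_apply, swap_apply_left, swap_apply_right,
      swap_apply_of_ne_of_ne, ne_eq, Fin.succ_ne_zero, Fin.succ_inj, not_false_eq_true, hi, hk, hW,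
      ↓reduceIte] <;> ring

lemma det_sigmaGram_comp_swap_zero (hW : ∀ x, W x x = 0) (P : Fin (n + 1) → Ω)
    (p : Fin (n + 1)) : (sigmaGram W (P ∘ swap 0 p)).det = (sigmaGram W P).det := by
  cases p using Fin.cases with
  | zero => simp
  | succ j =>
    rw [sigmaGram_comp_swap_zero_succ hW, det_mul, det_mul, det_transpose, det_rebaseMatrix]
    ring

lemma sigmaGram_comp_decomposeFin_symm (P : Fin (n + 1) → Ω) (p : Fin (n + 1))
    (e : Perm (Fin n)) :
    sigmaGram W (P ∘ Perm.decomposeFin.symm (p, e)) =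
      (sigmaGram W (P ∘ swap 0 p)).submatrix e e := by
  ext i k
  simp [sigmaGram]

lemma det_sigmaGram_comp_perm (hW : ∀ x, W x x = 0) (P : Fin (n + 1) → Ω)
    (σ : Perm (Fin (n + 1))) : (sigmaGram W (P ∘ σ)).det = (sigmaGram W P).det := by
  obtain ⟨⟨p, e⟩, rfl⟩ := Perm.decomposeFin.symm.surjective σ
  rw [sigmaGram_comp_decomposeFin_symm, det_submatrix_equiv_self, det_sigmaGram_comp_swap_zero hW]

end SigmaGram

theorem Fn_invariant_under_permutation_general
    {Ω : Type*}
    (W : Ω → Ω → ℝ) (hW : ∀ P, W P P = 0)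
    (n : ℕ) (P : Fin (n + 1) → Ω) (σ : Equiv.Perm (Fin (n + 1))) :
    Matrix.det (Matrix.of fun i k : Fin n =>
        W ((P ∘ σ) i.succ) ((P ∘ σ) 0) + W ((P ∘ σ) 0) ((P ∘ σ) k.succ)
          - W ((P ∘ σ) i.succ) ((P ∘ σ) k.succ)) =
      Matrix.det (Matrix.of fun i k : Fin n =>
        W (P i.succ) (P 0) + W (P 0) (P k.succ) - W (P i.succ) (P k.succ)) :=
  det_sigmaGram_comp_perm hW P σ

/-- the quantity `Fₙ(P) = det[(P₀Pᵢ.P₀P_k)]` is invariant under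
every permutation of the `n+1` points `P₀, …, Pₙ`. -/
theorem Fn_invariant_under_permutation
    {Ω : Type*} [Nonempty Ω]
    (W : Ω → Ω → ℝ) (hW : ∀ P, W P P = 0)
    (n : ℕ) (P : Fin (n + 1) → Ω) (σ : Equiv.Perm (Fin (n + 1))) :
    Matrix.det (Matrix.of fun i k : Fin n =>
        W ((P ∘ σ) i.succ) ((P ∘ σ) 0) + W ((P ∘ σ) 0) ((P ∘ σ) k.succ)
          - W ((P ∘ σ) i.succ) ((P ∘ σ) k.succ)) =
      Matrix.det (Matrix.of fun i k : Fin n =>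
        W (P i.succ) (P 0) + W (P 0) (P k.succ) - W (P i.succ) (P k.succ)) :=
  Fn_invariant_under_permutation_general W hW n P σ
end

section
/- Let A : ℝ^N × ℝ^N → ℝ be continuously differentiable and antisymmetric, A(x,x′) = −A(x′,x), and set a_k(x) := A_{,k}(x,x) (the coincidence value of the partial derivative in the first argument). If A_{,k′}(x,x′) = −a_k(x′) for all x, x′ and all k (i.e., the derivative in the second argument does not depend on the first argument), then there exists a function h : ℝ^N → ℝ such that A(x,x′) = h(x) − h(x′) for all x, x′, and consequently the cyclic sum vanishes: A(x,y) + A(y,z) + A(z,x) = 0 for all x, y, z. -/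
/-- Partial derivative of a two-point function with respect to the `i`-th
coordinate of its first argument. -/
noncomputable def d1 {N : ℕ} (F : (Fin N → ℝ) → (Fin N → ℝ) → ℝ) (i : Fin N)
    (x x' : Fin N → ℝ) : ℝ :=
  fderiv ℝ (fun y => F y x') x (Pi.single i 1)

/-- Partial derivative of a two-point function with respect to the `i`-th
coordinate of its second argument. -/
noncomputable def d2 {N : ℕ} (F : (Fin N → ℝ) → (Fin N → ℝ) → ℝ) (i : Fin N)
    (x x' : Fin N → ℝ) : ℝ :=
  fderiv ℝ (fun y => F x y) x' (Pi.single i 1)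

/-- if `A` is C¹, antisymmetric, and its derivative in the second
argument does not depend on the first argument (`A_{,k′}(x,x′) = −a_k(x′)`,
where `a_k(x) = [A_{,k}]`), then `A(x,x′) = h(x) − h(x′)` for some `h`, and
the cyclic sum of `A` vanishes. -/
theorem antisymmetric_part_exact_of_separated_derivative
    (N : ℕ) (A : (Fin N → ℝ) → (Fin N → ℝ) → ℝ)
    (hA : ContDiff ℝ 1 fun p : (Fin N → ℝ) × (Fin N → ℝ) => A p.1 p.2)
    (hanti : ∀ x x', A x x' = - A x' x)
    (a : Fin N → (Fin N → ℝ) → ℝ)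
    (ha : ∀ k x, a k x = d1 A k x x)
    (hsep : ∀ x x' (k : Fin N), d2 A k x x' = - a k x') :
    (∃ h : (Fin N → ℝ) → ℝ, ∀ x x', A x x' = h x - h x') ∧
    (∀ x y z, A x y + A y z + A z x = 0) := by
  have hdiff : Differentiable ℝ (fun p : (Fin N → ℝ) × (Fin N → ℝ) => A p.1 p.2) :=
    hA.differentiable one_ne_zero
  have hd2 : ∀ x : Fin N → ℝ, Differentiable ℝ (fun y => A x y) := by
    intro x
    exact hdiff.comp ((differentiable_const x).prodMk differentiable_id)
  have key : ∀ x x₀ y : Fin N → ℝ,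
      fderiv ℝ (fun y => A x y) y = fderiv ℝ (fun y => A x₀ y) y := by
    intro x x₀ y
    have h1 : ∀ i, fderiv ℝ (fun y => A x y) y (Pi.single i 1)
        = fderiv ℝ (fun y => A x₀ y) y (Pi.single i 1) := by
      intro i
      have e1 := hsep x y i
      have e2 := hsep x₀ y i
      simp only [d2] at e1 e2
      rw [e1, e2]
    apply ContinuousLinearMap.ext
    intro v
    have hv : v = ∑ i, v i • (Pi.single i 1 : Fin N → ℝ) := by
      ext j
      simp [Pi.single_apply, Finset.sum_apply]
    rw [hv]
    simp [map_sum, map_smul, h1]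
  have hconst : ∀ x x₀ y : Fin N → ℝ, A x y - A x₀ y = A x 0 - A x₀ 0 := by
    intro x x₀ y
    have hF : Differentiable ℝ (fun y => A x y - A x₀ y) := (hd2 x).sub (hd2 x₀)
    have hz : ∀ y, fderiv ℝ (fun y => A x y - A x₀ y) y = 0 := by
      intro y
      rw [fderiv_fun_sub ((hd2 x).differentiableAt) ((hd2 x₀).differentiableAt), key x x₀ y]
      simp
    exact is_const_of_fderiv_eq_zero hF hz y 0
  have hformula : ∀ x x', A x x' = A x 0 - A x' 0 := by
    intro x x'
    have h1 := hconst x x' x'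
    have h2 := hanti x' x'
    linarith
  refine ⟨⟨fun x => A x 0, hformula⟩, ?_⟩
  intro x y z
  rw [hformula x y, hformula y z, hformula z x]
  ring
end

section
/- Let G : ℝ^N × ℝ^N → ℝ be three times continuously differentiable, symmetric, G(x,x′) = G(x′,x), with G(x,x) = 0 for all x, and set g_{ik}(x) := [G_{,ik}]. Then the coincidence values of the third derivatives are: [G_{,ikl}] = [G_{,i′k′l′}] = ½(g_{ik,l} + g_{li,k} + g_{kl,i}); [G_{,ikl′}] = ½(g_{ik,l} − g_{li,k} − g_{kl,i}); and [G_{,ik′l′}] = ½(g_{kl,i} − g_{li,k} − g_{ik,l}). -/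
/-- Partial derivative of a one-point function with respect to the `l`-th
coordinate. -/
noncomputable def pd {N : ℕ} (f : (Fin N → ℝ) → ℝ) (l : Fin N)
    (x : Fin N → ℝ) : ℝ :=
  fderiv ℝ f x (Pi.single l 1)

/-- Directional derivative of a function on the product space. -/
noncomputable def Dd {N : ℕ} (F : ((Fin N → ℝ) × (Fin N → ℝ)) → ℝ)
    (v p : (Fin N → ℝ) × (Fin N → ℝ)) : ℝ :=
  fderiv ℝ F p v

/-- Unprimed coordinate direction. -/
def ee {N : ℕ} (i : Fin N) : (Fin N → ℝ) × (Fin N → ℝ) := (Pi.single i 1, 0)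

/-- Primed coordinate direction. -/
def ff {N : ℕ} (i : Fin N) : (Fin N → ℝ) × (Fin N → ℝ) := (0, Pi.single i 1)

lemma Dd_contDiff {N : ℕ} {n : ℕ} {F : ((Fin N → ℝ) × (Fin N → ℝ)) → ℝ}
    (hF : ContDiff ℝ ((n : WithTop ℕ∞) + 1) F) (v : (Fin N → ℝ) × (Fin N → ℝ)) :
    ContDiff ℝ (n : WithTop ℕ∞) (Dd F v) := by
  have h : ContDiff ℝ (n : WithTop ℕ∞) (fderiv ℝ F) := hF.fderiv_right le_rfl
  exact h.clm_apply contDiff_const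

lemma Dd_comm {N : ℕ} {F : ((Fin N → ℝ) × (Fin N → ℝ)) → ℝ}
    (hF : ContDiff ℝ 2 F) (v w p : (Fin N → ℝ) × (Fin N → ℝ)) :
    Dd (Dd F v) w p = Dd (Dd F w) v p := by
  have hs := (hF.contDiffAt (x := p)).isSymmSndFDerivAt (by simp)
  have hd : DifferentiableAt ℝ (fderiv ℝ F) p := by
    have h1 : ContDiff ℝ (1 : WithTop ℕ∞) (fderiv ℝ F) := by
      apply hF.fderiv_right; norm_num
    exact (h1.differentiable one_ne_zero) p
  have e : ∀ u, fderiv ℝ (fun q => fderiv ℝ F q u) p = (fderiv ℝ (fderiv ℝ F) p).flip u := by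
    intro u
    rw [fderiv_clm_apply hd (differentiableAt_const u)]
    simp
  show fderiv ℝ (fun q => fderiv ℝ F q v) p w = fderiv ℝ (fun q => fderiv ℝ F q w) p v
  rw [e v, e w]
  exact hs w v

lemma d1_eq {N : ℕ} {F : (Fin N → ℝ) → (Fin N → ℝ) → ℝ}
    {Φ : ((Fin N → ℝ) × (Fin N → ℝ)) → ℝ} (hΦ : Differentiable ℝ Φ)
    (hFΦ : ∀ y z, F y z = Φ (y, z)) (i : Fin N) (x x' : Fin N → ℝ) :
    d1 F i x x' = Dd Φ (ee i) (x, x') := by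
  have h1 : HasFDerivAt (fun y : Fin N → ℝ => (y, x'))
      ((ContinuousLinearMap.id ℝ (Fin N → ℝ)).prod 0) x :=
    HasFDerivAt.prodMk (hasFDerivAt_id x) (hasFDerivAt_const x' x)
  have h2 : HasFDerivAt (fun y => F y x')
      ((fderiv ℝ Φ (x, x')).comp ((ContinuousLinearMap.id ℝ (Fin N → ℝ)).prod 0)) x := by
    have heq : (fun y => F y x') = (Φ ∘ fun y : Fin N → ℝ => (y, x')) := by
      funext y; simp [Function.comp, hFΦ]
    rw [heq]
    refine HasFDerivAt.comp x ?_ h1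
    exact (hΦ (x, x')).hasFDerivAt
  show fderiv ℝ (fun y => F y x') x (Pi.single i 1) = fderiv ℝ Φ (x, x') (ee i)
  rw [h2.fderiv]
  simp [ee]

lemma d2_eq {N : ℕ} {F : (Fin N → ℝ) → (Fin N → ℝ) → ℝ}
    {Φ : ((Fin N → ℝ) × (Fin N → ℝ)) → ℝ} (hΦ : Differentiable ℝ Φ)
    (hFΦ : ∀ y z, F y z = Φ (y, z)) (i : Fin N) (x x' : Fin N → ℝ) :
    d2 F i x x' = Dd Φ (ff i) (x, x') := by
  have h1 : HasFDerivAt (fun y : Fin N → ℝ => (x, y))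
      ((0 : (Fin N → ℝ) →L[ℝ] (Fin N → ℝ)).prod (ContinuousLinearMap.id ℝ (Fin N → ℝ))) x' :=
    HasFDerivAt.prodMk (hasFDerivAt_const x x') (hasFDerivAt_id x')
  have h2 : HasFDerivAt (fun y => F x y)
      ((fderiv ℝ Φ (x, x')).comp
        ((0 : (Fin N → ℝ) →L[ℝ] (Fin N → ℝ)).prod (ContinuousLinearMap.id ℝ (Fin N → ℝ)))) x' := by
    have heq : (fun y => F x y) = (Φ ∘ fun y : Fin N → ℝ => (x, y)) := by
      funext y; simp [Function.comp, hFΦ]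
    rw [heq]
    refine HasFDerivAt.comp x' ?_ h1
    exact (hΦ (x, x')).hasFDerivAt
  show fderiv ℝ (fun y => F x y) x' (Pi.single i 1) = fderiv ℝ Φ (x, x') (ff i)
  rw [h2.fderiv]
  simp [ff]

lemma pd_diag {N : ℕ} {f : (Fin N → ℝ) → ℝ} {Φ : ((Fin N → ℝ) × (Fin N → ℝ)) → ℝ}
    (hΦ : Differentiable ℝ Φ) (hfΦ : ∀ y, f y = Φ (y, y)) (l : Fin N) (x : Fin N → ℝ) :
    pd f l x = Dd Φ (ee l + ff l) (x, x) := by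
  have h1 : HasFDerivAt (fun y : Fin N → ℝ => (y, y))
      ((ContinuousLinearMap.id ℝ (Fin N → ℝ)).prod (ContinuousLinearMap.id ℝ (Fin N → ℝ))) x :=
    HasFDerivAt.prodMk (hasFDerivAt_id x) (hasFDerivAt_id x)
  have h2 : HasFDerivAt f
      ((fderiv ℝ Φ (x, x)).comp
        ((ContinuousLinearMap.id ℝ (Fin N → ℝ)).prod (ContinuousLinearMap.id ℝ (Fin N → ℝ)))) x := by
    have heq : f = (Φ ∘ fun y : Fin N → ℝ => (y, y)) := by
      funext y; simp [Function.comp, hfΦ]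
    rw [heq]
    refine HasFDerivAt.comp x ?_ h1
    exact (hΦ (x, x)).hasFDerivAt
  show fderiv ℝ f x (Pi.single l 1) = fderiv ℝ Φ (x, x) (ee l + ff l)
  rw [h2.fderiv]
  have : ee l + ff l = ((Pi.single l 1 : Fin N → ℝ), (Pi.single l 1 : Fin N → ℝ)) := by
    simp [ee, ff, Prod.ext_iff]
  rw [this]
  simp

lemma Dd_swap {N : ℕ} {F : ((Fin N → ℝ) × (Fin N → ℝ)) → ℝ} (hF : Differentiable ℝ F)
    (v p : (Fin N → ℝ) × (Fin N → ℝ)) :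
    Dd (fun q => F (q.2, q.1)) v p = Dd F (v.2, v.1) (p.2, p.1) := by
  set σ : ((Fin N → ℝ) × (Fin N → ℝ)) →L[ℝ] ((Fin N → ℝ) × (Fin N → ℝ)) :=
    (ContinuousLinearMap.snd ℝ (Fin N → ℝ) (Fin N → ℝ)).prod
      (ContinuousLinearMap.fst ℝ (Fin N → ℝ) (Fin N → ℝ)) with hσ
  have h1 : HasFDerivAt (fun q : (Fin N → ℝ) × (Fin N → ℝ) => (q.2, q.1)) σ p := σ.hasFDerivAt
  have h2 : HasFDerivAt (fun q : (Fin N → ℝ) × (Fin N → ℝ) => F (q.2, q.1))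
      ((fderiv ℝ F (p.2, p.1)).comp σ) p :=
    (hF (p.2, p.1)).hasFDerivAt.comp p h1
  show fderiv ℝ (fun q : (Fin N → ℝ) × (Fin N → ℝ) => F (q.2, q.1)) p v
      = fderiv ℝ F (p.2, p.1) (v.2, v.1)
  rw [h2.fderiv]
  simp [hσ]

lemma Dd_add {N : ℕ} (F : ((Fin N → ℝ) × (Fin N → ℝ)) → ℝ)
    (u v p : (Fin N → ℝ) × (Fin N → ℝ)) :
    Dd F (u + v) p = Dd F u p + Dd F v p :=
  (fderiv ℝ F p).map_add u v

/-- coincidence values of the third derivatives of a symmetric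
two-point function `G` vanishing at coincidence, expressed through derivatives
of the metric tensor `g_{ik}(x) = [G_{,ik}]`. -/
theorem symmetric_part_third_derivatives_at_coincidence
    (N : ℕ) (G : (Fin N → ℝ) → (Fin N → ℝ) → ℝ)
    (hG : ContDiff ℝ 3 fun p : (Fin N → ℝ) × (Fin N → ℝ) => G p.1 p.2)
    (hsym : ∀ x x', G x x' = G x' x)
    (hzero : ∀ x, G x x = 0)
    (g : Fin N → Fin N → (Fin N → ℝ) → ℝ)
    (hg : ∀ i k x, g i k x = d1 (d1 G i) k x x) :
    (∀ (i k l : Fin N) x, d1 (d1 (d1 G i) k) l x x =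
      (1 / 2) * (pd (g i k) l x + pd (g l i) k x + pd (g k l) i x)) ∧
    (∀ (i k l : Fin N) x, d2 (d2 (d2 G i) k) l x x =
      (1 / 2) * (pd (g i k) l x + pd (g l i) k x + pd (g k l) i x)) ∧
    (∀ (i k l : Fin N) x, d2 (d1 (d1 G i) k) l x x =
      (1 / 2) * (pd (g i k) l x - pd (g l i) k x - pd (g k l) i x)) ∧
    (∀ (i k l : Fin N) x, d2 (d2 (d1 G i) k) l x x =
      (1 / 2) * (pd (g k l) i x - pd (g l i) k x - pd (g i k) l x)) := by
  set Φ : ((Fin N → ℝ) × (Fin N → ℝ)) → ℝ := fun p => G p.1 p.2 with hΦdef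
  -- smoothness bookkeeping
  have hg3 : ContDiff ℝ (((2 : ℕ) : WithTop ℕ∞) + 1) Φ := by exact_mod_cast hG
  have hg2 : ContDiff ℝ (2 : WithTop ℕ∞) Φ := hG.of_le (by norm_num)
  have hc2 : ∀ v, ContDiff ℝ (2 : WithTop ℕ∞) (Dd Φ v) := by
    intro v
    have := Dd_contDiff hg3 v
    exact_mod_cast this
  have hc2' : ∀ v, ContDiff ℝ (((1 : ℕ) : WithTop ℕ∞) + 1) (Dd Φ v) := by
    intro v; exact_mod_cast hc2 v
  have hc1 : ∀ v w, ContDiff ℝ (((0 : ℕ) : WithTop ℕ∞) + 1) (Dd (Dd Φ v) w) := by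
    intro v w
    have := Dd_contDiff (hc2' v) w
    exact_mod_cast this
  have hD3 : Differentiable ℝ Φ := hG.differentiable (by norm_num)
  have hD2 : ∀ v, Differentiable ℝ (Dd Φ v) := fun v => (hc2 v).differentiable (by norm_num)
  have hD1 : ∀ v w, Differentiable ℝ (Dd (Dd Φ v) w) := fun v w =>
    (hc1 v w).differentiable (by simp)
  -- translations of d1/d2 into Dd
  have hb1 : ∀ (i : Fin N) y z, d1 G i y z = Dd Φ (ee i) (y, z) := fun i y z =>
    d1_eq hD3 (fun _ _ => rfl) i y z
  have hb2 : ∀ (i : Fin N) y z, d2 G i y z = Dd Φ (ff i) (y, z) := fun i y z =>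
    d2_eq hD3 (fun _ _ => rfl) i y z
  have h11 : ∀ (i k : Fin N) y z, d1 (d1 G i) k y z = Dd (Dd Φ (ee i)) (ee k) (y, z) :=
    fun i k y z => d1_eq (hD2 (ee i)) (hb1 i) k y z
  have h21 : ∀ (i k : Fin N) y z, d2 (d1 G i) k y z = Dd (Dd Φ (ee i)) (ff k) (y, z) :=
    fun i k y z => d2_eq (hD2 (ee i)) (hb1 i) k y z
  have h22 : ∀ (i k : Fin N) y z, d2 (d2 G i) k y z = Dd (Dd Φ (ff i)) (ff k) (y, z) :=
    fun i k y z => d2_eq (hD2 (ff i)) (hb2 i) k y z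
  have t111 : ∀ (i k l : Fin N) x, d1 (d1 (d1 G i) k) l x x
      = Dd (Dd (Dd Φ (ee i)) (ee k)) (ee l) (x, x) :=
    fun i k l x => d1_eq (hD1 (ee i) (ee k)) (h11 i k) l x x
  have t112 : ∀ (i k l : Fin N) x, d2 (d1 (d1 G i) k) l x x
      = Dd (Dd (Dd Φ (ee i)) (ee k)) (ff l) (x, x) :=
    fun i k l x => d2_eq (hD1 (ee i) (ee k)) (h11 i k) l x x
  have t122 : ∀ (i k l : Fin N) x, d2 (d2 (d1 G i) k) l x x
      = Dd (Dd (Dd Φ (ee i)) (ff k)) (ff l) (x, x) :=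
    fun i k l x => d2_eq (hD1 (ee i) (ff k)) (h21 i k) l x x
  have t222 : ∀ (i k l : Fin N) x, d2 (d2 (d2 G i) k) l x x
      = Dd (Dd (Dd Φ (ff i)) (ff k)) (ff l) (x, x) :=
    fun i k l x => d2_eq (hD1 (ff i) (ff k)) (h22 i k) l x x
  -- translation of pd g
  have hpd : ∀ (i k l : Fin N) x, pd (g i k) l x
      = Dd (Dd (Dd Φ (ee i)) (ee k)) (ee l + ff l) (x, x) := fun i k l x =>
    pd_diag (hD1 (ee i) (ee k)) (fun y => (hg i k y).trans (h11 i k y y)) l x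
  -- symmetry of derivatives (commutation of directions)
  have comm_out : ∀ u v w p, Dd (Dd (Dd Φ u) v) w p = Dd (Dd (Dd Φ u) w) v p :=
    fun u v w p => Dd_comm (by exact_mod_cast hc2 u) v w p
  have comm_in : ∀ u v, Dd (Dd Φ u) v = Dd (Dd Φ v) u := fun u v =>
    funext fun p => Dd_comm hg2 u v p
  have comm_in3 : ∀ u v w p, Dd (Dd (Dd Φ u) v) w p = Dd (Dd (Dd Φ v) u) w p := by
    intro u v w p; rw [comm_in u v]
  -- additivity in the middle and inner slots
  have add_mid : ∀ u v1 v2 w p, Dd (Dd (Dd Φ u) (v1 + v2)) w p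
      = Dd (Dd (Dd Φ u) v1) w p + Dd (Dd (Dd Φ u) v2) w p := by
    intro u v1 v2 w p
    rw [comm_out u (v1 + v2) w, Dd_add, comm_out u w v1, comm_out u w v2]
  have add_in : ∀ u1 u2 v w p, Dd (Dd (Dd Φ (u1 + u2)) v) w p
      = Dd (Dd (Dd Φ u1) v) w p + Dd (Dd (Dd Φ u2) v) w p := by
    intro u1 u2 v w p
    rw [comm_in (u1 + u2) v, add_mid v u1 u2 w p, comm_in u1 v, comm_in u2 v]
  -- swap symmetry from G(x,x') = G(x',x)
  have hΦswap : (fun q : (Fin N → ℝ) × (Fin N → ℝ) => Φ (q.2, q.1)) = Φ :=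
    funext fun q => hsym q.2 q.1
  have s1 : ∀ v p, Dd Φ v (p.2, p.1) = Dd Φ (v.2, v.1) p := by
    intro v p
    have h := Dd_swap hD3 (v.2, v.1) p
    rw [hΦswap] at h
    exact h.symm
  have s2 : ∀ w v p, Dd (Dd Φ w) v (p.2, p.1) = Dd (Dd Φ (w.2, w.1)) (v.2, v.1) p := by
    intro w v p
    have hfun : Dd Φ w = fun q : (Fin N → ℝ) × (Fin N → ℝ) => Dd Φ (w.2, w.1) (q.2, q.1) := by
      funext q
      have := s1 (w.2, w.1) q
      simpa using this.symm
    calc Dd (Dd Φ w) v (p.2, p.1)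
        = Dd (fun q : (Fin N → ℝ) × (Fin N → ℝ) => Dd Φ (w.2, w.1) (q.2, q.1)) v (p.2, p.1) := by
          rw [← hfun]
      _ = Dd (Dd Φ (w.2, w.1)) (v.2, v.1) ((p.2, p.1).2, (p.2, p.1).1) :=
          Dd_swap (hD2 (w.2, w.1)) v (p.2, p.1)
      _ = Dd (Dd Φ (w.2, w.1)) (v.2, v.1) p := rfl
  have s3 : ∀ w v u p, Dd (Dd (Dd Φ w) v) u (p.2, p.1)
      = Dd (Dd (Dd Φ (w.2, w.1)) (v.2, v.1)) (u.2, u.1) p := by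
    intro w v u p
    have hfun : Dd (Dd Φ w) v
        = fun q : (Fin N → ℝ) × (Fin N → ℝ) => Dd (Dd Φ (w.2, w.1)) (v.2, v.1) (q.2, q.1) := by
      funext q
      have := s2 (w.2, w.1) (v.2, v.1) q
      simpa using this.symm
    calc Dd (Dd (Dd Φ w) v) u (p.2, p.1)
        = Dd (fun q : (Fin N → ℝ) × (Fin N → ℝ) =>
            Dd (Dd Φ (w.2, w.1)) (v.2, v.1) (q.2, q.1)) u (p.2, p.1) := by rw [← hfun]
      _ = Dd (Dd (Dd Φ (w.2, w.1)) (v.2, v.1)) (u.2, u.1) ((p.2, p.1).2, (p.2, p.1).1) :=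
          Dd_swap (hD1 (w.2, w.1) (v.2, v.1)) u (p.2, p.1)
      _ = Dd (Dd (Dd Φ (w.2, w.1)) (v.2, v.1)) (u.2, u.1) p := rfl
  -- specialized swap at coincidence
  have sw3 : ∀ (w v u : (Fin N → ℝ) × (Fin N → ℝ)) (x : Fin N → ℝ),
      Dd (Dd (Dd Φ w) v) u (x, x) = Dd (Dd (Dd Φ (w.2, w.1)) (v.2, v.1)) (u.2, u.1) (x, x) :=
    fun w v u x => s3 w v u (x, x)
  -- vanishing on the diagonal
  have pz : ∀ (l : Fin N) (x : Fin N → ℝ), pd (fun _ : Fin N → ℝ => (0 : ℝ)) l x = 0 := by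
    intro l x; simp [pd]
  have z1 : ∀ (i : Fin N) x, Dd Φ (ee i + ff i) (x, x) = 0 := by
    intro i x
    have h := pd_diag (f := fun _ : Fin N → ℝ => (0 : ℝ)) hD3 (fun y => (hzero y).symm) i x
    rw [← h]; exact pz i x
  have z2 : ∀ (i k : Fin N) x, Dd (Dd Φ (ee i + ff i)) (ee k + ff k) (x, x) = 0 := by
    intro i k x
    have h := pd_diag (f := fun _ : Fin N → ℝ => (0 : ℝ)) (hD2 (ee i + ff i))
      (fun y => (z1 i y).symm) k x
    rw [← h]; exact pz k x
  have z3 : ∀ (i k l : Fin N) x,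
      Dd (Dd (Dd Φ (ee i + ff i)) (ee k + ff k)) (ee l + ff l) (x, x) = 0 := by
    intro i k l x
    have h := pd_diag (f := fun _ : Fin N → ℝ => (0 : ℝ)) (hD1 (ee i + ff i) (ee k + ff k))
      (fun y => (z2 i k y).symm) l x
    rw [← h]; exact pz l x
  -- the main algebraic identities
  have key : ∀ (i k l : Fin N) (x : Fin N → ℝ),
      Dd (Dd (Dd Φ (ee i)) (ee k)) (ee l) (x, x) =
        (1 / 2) * (pd (g i k) l x + pd (g l i) k x + pd (g k l) i x) ∧
      Dd (Dd (Dd Φ (ff i)) (ff k)) (ff l) (x, x) =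
        (1 / 2) * (pd (g i k) l x + pd (g l i) k x + pd (g k l) i x) ∧
      Dd (Dd (Dd Φ (ee i)) (ee k)) (ff l) (x, x) =
        (1 / 2) * (pd (g i k) l x - pd (g l i) k x - pd (g k l) i x) ∧
      Dd (Dd (Dd Φ (ee i)) (ff k)) (ff l) (x, x) =
        (1 / 2) * (pd (g k l) i x - pd (g l i) k x - pd (g i k) l x) := by
    intro i k l x
    -- canonical quantities
    set a := Dd (Dd (Dd Φ (ee i)) (ee k)) (ee l) (x, x) with ha
    set b1 := Dd (Dd (Dd Φ (ee i)) (ee k)) (ff l) (x, x) with hb1'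
    set b2 := Dd (Dd (Dd Φ (ee i)) (ee l)) (ff k) (x, x) with hb2'
    set b3 := Dd (Dd (Dd Φ (ee k)) (ee l)) (ff i) (x, x) with hb3'
    -- P, Q, R in terms of a, b's
    have hP : pd (g i k) l x = a + b1 := by
      rw [hpd i k l x, Dd_add]
    have hQ : pd (g l i) k x = a + b2 := by
      rw [hpd l i k x, Dd_add]
      congr 1
      · rw [ha, comm_in3 (ee l) (ee i) (ee k) (x, x), comm_out (ee i) (ee l) (ee k) (x, x)]
      · rw [hb2', comm_in3 (ee l) (ee i) (ff k) (x, x)]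
    have hR : pd (g k l) i x = a + b3 := by
      rw [hpd k l i x, Dd_add]
      congr 1
      rw [ha, comm_in3 (ee k) (ee l) (ee i) (x, x), comm_out (ee l) (ee k) (ee i) (x, x),
        comm_in3 (ee l) (ee i) (ee k) (x, x), comm_out (ee i) (ee l) (ee k) (x, x)]
    -- normalize the 8 expansion terms
    have n_fee : Dd (Dd (Dd Φ (ff i)) (ee k)) (ee l) (x, x) = b3 := by
      rw [comm_in3 (ff i) (ee k) (ee l) (x, x), comm_out (ee k) (ff i) (ee l) (x, x)]
    have n_efe : Dd (Dd (Dd Φ (ee i)) (ff k)) (ee l) (x, x) = b2 := by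
      rw [comm_out (ee i) (ff k) (ee l) (x, x)]
    have n_ffe : Dd (Dd (Dd Φ (ff i)) (ff k)) (ee l) (x, x) = b1 := by
      rw [show Dd (Dd (Dd Φ (ff i)) (ff k)) (ee l) (x, x)
          = Dd (Dd (Dd Φ (ee i)) (ee k)) (ff l) (x, x) from sw3 (ff i) (ff k) (ee l) x]
    have n_fef : Dd (Dd (Dd Φ (ff i)) (ee k)) (ff l) (x, x) = b2 := by
      rw [show Dd (Dd (Dd Φ (ff i)) (ee k)) (ff l) (x, x)
          = Dd (Dd (Dd Φ (ee i)) (ff k)) (ee l) (x, x) from sw3 (ff i) (ee k) (ff l) x]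
      exact n_efe
    have n_eff : Dd (Dd (Dd Φ (ee i)) (ff k)) (ff l) (x, x) = b3 := by
      rw [show Dd (Dd (Dd Φ (ee i)) (ff k)) (ff l) (x, x)
          = Dd (Dd (Dd Φ (ff i)) (ee k)) (ee l) (x, x) from sw3 (ee i) (ff k) (ff l) x]
      exact n_fee
    have n_fff : Dd (Dd (Dd Φ (ff i)) (ff k)) (ff l) (x, x) = a := by
      rw [show Dd (Dd (Dd Φ (ff i)) (ff k)) (ff l) (x, x)
          = Dd (Dd (Dd Φ (ee i)) (ee k)) (ee l) (x, x) from sw3 (ff i) (ff k) (ff l) x]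
    -- expansion of the zero identity
    have hZ : 2 * a + 2 * (b1 + b2 + b3) = 0 := by
      have h := z3 i k l x
      rw [Dd_add, add_mid, add_mid, add_in, add_in, add_in, add_in] at h
      rw [n_fee, n_efe, n_ffe, n_fef, n_eff, n_fff] at h
      linarith
    refine ⟨by linarith, ?_, by linarith, by linarith⟩
    rw [n_fff]; linarith
  refine ⟨fun i k l x => ?_, fun i k l x => ?_, fun i k l x => ?_, fun i k l x => ?_⟩
  · rw [t111 i k l x]; exact (key i k l x).1
  · rw [t222 i k l x]; exact (key i k l x).2.1
  · rw [t112 i k l x]; exact (key i k l x).2.2.1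
  · rw [t122 i k l x]; exact (key i k l x).2.2.2
end

section
/- Let G : ℝ^N × ℝ^N → ℝ be three times continuously differentiable, symmetric, with G(x,x) = 0, and suppose the matrix g_{ik}(x₀) := [G_{,ik}](x₀) is invertible at a point x₀. Then the mixed-derivative matrix G_{,is′}(x₀,x₀) = −g_{is}(x₀) is invertible, and the coincidence value of the two-point Christoffel symbol Γ^i_{kl}(x,x′) := ∑_s G^{is′} G_{,kls′} (where (G^{is′}) is the matrix inverse of (G_{,is′})) equals the one-point Christoffel symbol of g: [Γ^i_{kl}](x₀) = γ^i_{kl}(x₀) := ½ ∑_s g^{is}(g_{ks,l} + g_{sl,k} − g_{lk,s}), with (g^{is}) the inverse of (g_{is}). -/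
section helpers
variable {E F P : Type*} [NormedAddCommGroup E] [NormedSpace ℝ E]
  [NormedAddCommGroup F] [NormedSpace ℝ F]
  [NormedAddCommGroup P] [NormedSpace ℝ P]

lemma eval_chain (A : P → (P →L[ℝ] F)) (hA : Differentiable ℝ A)
    {m : E → P} {L : E →L[ℝ] P} {x : E} (hm : HasFDerivAt m L x) (v : P) :
    HasFDerivAt (fun y => A (m y) v)
      ((ContinuousLinearMap.apply ℝ F v).comp ((fderiv ℝ A (m x)).comp L)) x := by
  have h1 : HasFDerivAt A (fderiv ℝ A (m x)) (m x) := (hA (m x)).hasFDerivAt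
  have := (ContinuousLinearMap.apply ℝ F v).hasFDerivAt.comp x (h1.comp x hm)
  exact this

lemma eval_chain_fderiv (A : P → (P →L[ℝ] F)) (hA : Differentiable ℝ A)
    {m : E → P} {L : E →L[ℝ] P} {x : E} (hm : HasFDerivAt m L x) (v : P) (e : E) :
    fderiv ℝ (fun y => A (m y) v) x e = fderiv ℝ A (m x) (L e) v := by
  rw [(eval_chain A hA hm v).fderiv]; simp

lemma eval_chain2 (A : P → (P →L[ℝ] (P →L[ℝ] F))) (hA : Differentiable ℝ A)
    {m : E → P} {L : E →L[ℝ] P} {x : E} (hm : HasFDerivAt m L x) (v w : P) :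
    HasFDerivAt (fun y => A (m y) v w)
      ((ContinuousLinearMap.apply ℝ F w).comp
        (((ContinuousLinearMap.apply ℝ (P →L[ℝ] F) v).comp ((fderiv ℝ A (m x)).comp L)))) x := by
  have := (ContinuousLinearMap.apply ℝ F w).hasFDerivAt.comp x (eval_chain A hA hm v)
  exact this

lemma eval_chain2_fderiv (A : P → (P →L[ℝ] (P →L[ℝ] F))) (hA : Differentiable ℝ A)
    {m : E → P} {L : E →L[ℝ] P} {x : E} (hm : HasFDerivAt m L x) (v w : P) (e : E) :
    fderiv ℝ (fun y => A (m y) v w) x e = fderiv ℝ A (m x) (L e) v w := by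
  rw [(eval_chain2 A hA hm v w).fderiv]; simp

end helpers

noncomputable section ws

variable {N : ℕ}

abbrev Ev (N : ℕ) := Fin N → ℝ
abbrev Pv (N : ℕ) := Ev N × Ev N

def W (G : Ev N → Ev N → ℝ) : Pv N → ℝ := fun p => G p.1 p.2
noncomputable def W1 (G : Ev N → Ev N → ℝ) : Pv N → (Pv N →L[ℝ] ℝ) := fderiv ℝ (W G)
noncomputable def W2 (G : Ev N → Ev N → ℝ) := fderiv ℝ (W1 G)
noncomputable def W3 (G : Ev N → Ev N → ℝ) := fderiv ℝ (W2 G)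

def av (i : Fin N) : Pv N := (Pi.single i 1, 0)
def bv (i : Fin N) : Pv N := (0, Pi.single i 1)
def cv (i : Fin N) : Pv N := (Pi.single i 1, Pi.single i 1)

variable {G : Ev N → Ev N → ℝ}

lemma hWd (hG : ContDiff ℝ 3 (W G)) : Differentiable ℝ (W G) :=
  hG.differentiable (by norm_num)
lemma hW1c (hG : ContDiff ℝ 3 (W G)) : ContDiff ℝ 2 (W1 G) :=
  hG.fderiv_right (by norm_num)
lemma hW1d (hG : ContDiff ℝ 3 (W G)) : Differentiable ℝ (W1 G) :=
  (hW1c hG).differentiable (by norm_num)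
lemma hW2c (hG : ContDiff ℝ 3 (W G)) : ContDiff ℝ 1 (W2 G) :=
  (hW1c hG).fderiv_right (by norm_num)
lemma hW2d (hG : ContDiff ℝ 3 (W G)) : Differentiable ℝ (W2 G) :=
  (hW2c hG).differentiable (by norm_num)

-- the "first argument" affine inclusion
lemma hmfst (x' x : Ev N) :
    HasFDerivAt (fun y : Ev N => ((y, x') : Pv N))
      ((ContinuousLinearMap.id ℝ (Ev N)).prod 0) x :=
  HasFDerivAt.prodMk (hasFDerivAt_id x) (hasFDerivAt_const x' x)

lemma hmsnd (x x' : Ev N) :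
    HasFDerivAt (fun y : Ev N => ((x, y) : Pv N))
      ((0 : Ev N →L[ℝ] Ev N).prod (ContinuousLinearMap.id ℝ (Ev N))) x' :=
  HasFDerivAt.prodMk (hasFDerivAt_const x x') (hasFDerivAt_id x')

lemma hmdiag (x : Ev N) :
    HasFDerivAt (fun y : Ev N => ((y, y) : Pv N))
      ((ContinuousLinearMap.id ℝ (Ev N)).prod (ContinuousLinearMap.id ℝ (Ev N))) x :=
  HasFDerivAt.prodMk (hasFDerivAt_id x) (hasFDerivAt_id x)

lemma rep1 (hG : ContDiff ℝ 3 (W G)) (i : Fin N) (x x' : Ev N) : d1 G i x x' = W1 G (x, x') (av i) := by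
  have h : HasFDerivAt (fun y => G y x')
      ((W1 G (x, x')).comp ((ContinuousLinearMap.id ℝ (Ev N)).prod 0)) x :=
    by have := (hWd hG (x, x')).hasFDerivAt.comp x (hmfst x' x); exact this
  rw [d1, h.fderiv]
  simp [av]

lemma rep2 (hG : ContDiff ℝ 3 (W G)) (i : Fin N) (x x' : Ev N) : d2 G i x x' = W1 G (x, x') (bv i) := by
  have h : HasFDerivAt (fun y => G x y)
      ((W1 G (x, x')).comp ((0 : Ev N →L[ℝ] Ev N).prod (ContinuousLinearMap.id ℝ (Ev N)))) x' :=
    ((hWd hG (x, x')).hasFDerivAt.comp x' (hmsnd x x'))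
  rw [d2, h.fderiv]
  simp [bv]

lemma rep11 (hG : ContDiff ℝ 3 (W G)) (i k : Fin N) (x x' : Ev N) :
    d1 (d1 G i) k x x' = W2 G (x, x') (av k) (av i) := by
  have hfun : (fun y => d1 G i y x') = fun y => W1 G (y, x') (av i) :=
    funext fun y => rep1 hG i y x'
  rw [d1, hfun, eval_chain_fderiv (W1 G) (hW1d hG) (hmfst x' x) (av i) (Pi.single k 1)]
  simp [av, W2]

lemma rep21 (hG : ContDiff ℝ 3 (W G)) (i s : Fin N) (x x' : Ev N) :
    d2 (d1 G i) s x x' = W2 G (x, x') (bv s) (av i) := by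
  have hfun : (fun y => d1 G i x y) = fun y => W1 G (x, y) (av i) :=
    funext fun y => rep1 hG i x y
  rw [d2, hfun, eval_chain_fderiv (W1 G) (hW1d hG) (hmsnd x x') (av i) (Pi.single s 1)]
  simp [bv, W2]

lemma rep211 (hG : ContDiff ℝ 3 (W G)) (k l s : Fin N) (x x' : Ev N) :
    d2 (d1 (d1 G k) l) s x x' = W3 G (x, x') (bv s) (av l) (av k) := by
  have hfun : (fun y => d1 (d1 G k) l x y) = fun y => W2 G (x, y) (av l) (av k) :=
    funext fun y => rep11 hG k l x y
  rw [d2, hfun, eval_chain2_fderiv (W2 G) (hW2d hG) (hmsnd x x') (av l) (av k) (Pi.single s 1)]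
  simp [bv, W3]


lemma repdiag (hG : ContDiff ℝ 3 (W G)) (v w : Pv N) (l : Fin N) (x : Ev N) :
    pd (fun y => W2 G (y, y) v w) l x
      = W3 G (x, x) (Pi.single l 1, Pi.single l 1) v w := by
  rw [pd, eval_chain2_fderiv (W2 G) (hW2d hG) (hmdiag x) v w (Pi.single l 1)]
  simp [W3]

lemma Z1 (hG : ContDiff ℝ 3 (W G)) (hzero : ∀ x, G x x = 0) (x v : Ev N) :
    W1 G (x, x) (v, v) = 0 := by
  have h0 := (hWd hG _).hasFDerivAt.comp x (hmdiag x)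
  have h : HasFDerivAt (fun y : Ev N => W G (y, y))
      ((W1 G (x, x)).comp
        ((ContinuousLinearMap.id ℝ (Ev N)).prod (ContinuousLinearMap.id ℝ (Ev N)))) x := h0
  have h2 : (fun y : Ev N => W G (y, y)) = fun _ => (0 : ℝ) := funext fun y => hzero y
  rw [h2] at h
  have h3 := h.unique (hasFDerivAt_const 0 x)
  have h4 := congrArg (fun L : Ev N →L[ℝ] ℝ => L v) h3
  simpa using h4

lemma Z2 (hG : ContDiff ℝ 3 (W G)) (hzero : ∀ x, G x x = 0) (x w v : Ev N) :
    W2 G (x, x) (w, w) (v, v) = 0 := by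
  have h := eval_chain (W1 G) (hW1d hG) (hmdiag x) (v, v)
  have h2 : (fun y : Ev N => W1 G (y, y) ((v, v) : Pv N)) = fun _ => (0 : ℝ) :=
    funext fun y => Z1 hG hzero y v
  rw [h2] at h
  have h3 := h.unique (hasFDerivAt_const 0 x)
  have h4 := congrArg (fun L : Ev N →L[ℝ] ℝ => L w) h3
  simpa [W2] using h4

lemma Z3 (hG : ContDiff ℝ 3 (W G)) (hzero : ∀ x, G x x = 0) (x u w v : Ev N) :
    W3 G (x, x) (u, u) (w, w) (v, v) = 0 := by
  have h := eval_chain2 (W2 G) (hW2d hG) (hmdiag x) (w, w) (v, v)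
  have h2 : (fun y : Ev N => W2 G (y, y) ((w, w) : Pv N) ((v, v) : Pv N)) = fun _ => (0 : ℝ) :=
    funext fun y => Z2 hG hzero y w v
  rw [h2] at h
  have h3 := h.unique (hasFDerivAt_const 0 x)
  have h4 := congrArg (fun L : Ev N →L[ℝ] ℝ => L u) h3
  simpa [W3] using h4

def sw (N : ℕ) : Pv N →L[ℝ] Pv N :=
  (ContinuousLinearMap.snd ℝ (Ev N) (Ev N)).prod (ContinuousLinearMap.fst ℝ (Ev N) (Ev N))

@[simp] lemma sw_apply (p : Pv N) : sw N p = (p.2, p.1) := rfl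

lemma symm1 (hG : ContDiff ℝ 3 (W G)) (hsym : ∀ x x', G x x' = G x' x) (p w : Pv N) :
    W1 G p w = W1 G (sw N p) (sw N w) := by
  have h : HasFDerivAt (fun q : Pv N => W G (sw N q)) ((W1 G (sw N p)).comp (sw N)) p :=
    (hWd hG _).hasFDerivAt.comp p (sw N).hasFDerivAt
  have h2 : (fun q : Pv N => W G (sw N q)) = W G := funext fun q => hsym q.2 q.1
  rw [h2] at h
  have h3 := h.unique (hWd hG p).hasFDerivAt
  have h4 := congrArg (fun L : Pv N →L[ℝ] ℝ => L w) h3.symm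
  simpa [W1] using h4

lemma symm2 (hG : ContDiff ℝ 3 (W G)) (hsym : ∀ x x', G x x' = G x' x) (p u w : Pv N) :
    W2 G p u w = W2 G (sw N p) (sw N u) (sw N w) := by
  have hA := eval_chain (W1 G) (hW1d hG) (hasFDerivAt_id p) w
  have hB := eval_chain (W1 G) (hW1d hG) ((sw N).hasFDerivAt (x := p)) (sw N w)
  have heq : (fun q : Pv N => W1 G (id q) w) = fun q => W1 G (sw N q) (sw N w) :=
    funext fun q => symm1 hG hsym q w
  rw [heq] at hA
  have h3 := hA.unique hB
  have h4 := congrArg (fun L : Pv N →L[ℝ] ℝ => L u) h3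
  simpa [W2] using h4

lemma symm3 (hG : ContDiff ℝ 3 (W G)) (hsym : ∀ x x', G x x' = G x' x) (p v u w : Pv N) :
    W3 G p v u w = W3 G (sw N p) (sw N v) (sw N u) (sw N w) := by
  have hA := eval_chain2 (W2 G) (hW2d hG) (hasFDerivAt_id p) u w
  have hB := eval_chain2 (W2 G) (hW2d hG) ((sw N).hasFDerivAt (x := p)) (sw N u) (sw N w)
  have heq : (fun q : Pv N => W2 G (id q) u w) = fun q => W2 G (sw N q) (sw N u) (sw N w) :=
    funext fun q => symm2 hG hsym q u w
  rw [heq] at hA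
  have h3 := hA.unique hB
  have h4 := congrArg (fun L : Pv N →L[ℝ] ℝ => L v) h3
  simpa [W3] using h4

lemma sym2nd (hG : ContDiff ℝ 3 (W G)) (p u v : Pv N) : W2 G p u v = W2 G p v u := by
  have h : IsSymmSndFDerivAt ℝ (W G) p :=
    hG.contDiffAt.isSymmSndFDerivAt (by norm_num)
  exact h u v

lemma sym3_23 (hG : ContDiff ℝ 3 (W G)) (p u v w : Pv N) :
    W3 G p u v w = W3 G p u w v := by
  have hA := eval_chain2 (W2 G) (hW2d hG) (hasFDerivAt_id p) v w
  have hB := eval_chain2 (W2 G) (hW2d hG) (hasFDerivAt_id p) w v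
  have heq : (fun q : Pv N => W2 G (id q) v w) = fun q => W2 G (id q) w v :=
    funext fun q => sym2nd hG q v w
  rw [heq] at hA
  have h3 := hA.unique hB
  have h4 := congrArg (fun L : Pv N →L[ℝ] ℝ => L u) h3
  simpa [W3] using h4

lemma sym3_12 (hG : ContDiff ℝ 3 (W G)) (p u v w : Pv N) :
    W3 G p u v w = W3 G p v u w := by
  have h : IsSymmSndFDerivAt ℝ (W1 G) p :=
    (hW1c hG).contDiffAt.isSymmSndFDerivAt (by simp)
  exact congrArg (fun L : Pv N →L[ℝ] ℝ => L w) (h u v)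

end ws

/-- for a symmetric C³ world function `G` with invertible metric
tensor `g_{ik}(x₀) = [G_{,ik}](x₀)`, the mixed-derivative matrix
`G_{,is′}(x₀,x₀)` equals `−g(x₀)` and is invertible, and the coincidence value
of the two-point Christoffel symbol `Γ^i_{kl} = ∑_s G^{is′} G_{,kls′}`
equals the one-point Christoffel symbol
`γ^i_{kl} = ½ ∑_s g^{is}(g_{ks,l} + g_{sl,k} − g_{lk,s})`. -/
theorem two_point_christoffel_coincides_with_christoffel
    (N : ℕ) (G : (Fin N → ℝ) → (Fin N → ℝ) → ℝ)
    (hG : ContDiff ℝ 3 fun p : (Fin N → ℝ) × (Fin N → ℝ) => G p.1 p.2)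
    (hsym : ∀ x x', G x x' = G x' x)
    (hzero : ∀ x, G x x = 0)
    (x₀ : Fin N → ℝ)
    (g : Fin N → Fin N → (Fin N → ℝ) → ℝ)
    (hg : ∀ i k x, g i k x = d1 (d1 G i) k x x)
    (gmat : Matrix (Fin N) (Fin N) ℝ)
    (hgmat : ∀ i k, gmat i k = g i k x₀)
    (hgu : IsUnit gmat.det)
    (M : Matrix (Fin N) (Fin N) ℝ)
    (hM : ∀ i s, M i s = d2 (d1 G i) s x₀ x₀) :
    M = -gmat ∧ IsUnit M.det ∧
    (∀ i k l, ∑ s, M⁻¹ i s * d2 (d1 (d1 G k) l) s x₀ x₀ =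
      (1 / 2) * ∑ s, gmat⁻¹ i s *
        (pd (g k s) l x₀ + pd (g s l) k x₀ - pd (g l k) s x₀)) := by
  have hGW : ContDiff ℝ 3 (W G) := hG
  -- entrywise M = -gmat
  have hMg : ∀ i s, M i s = -(gmat i s) := by
    intro i s
    have hm : M i s = W2 G (x₀, x₀) (bv s) (av i) := by
      rw [hM i s, rep21 hGW i s x₀ x₀]
    have hgm : gmat i s = W2 G (x₀, x₀) (av s) (av i) := by
      rw [hgmat, hg, rep11 hGW i s x₀ x₀]
    have h0 := Z2 hGW hzero x₀ (Pi.single s 1) (Pi.single i 1)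
    have hcs : ((Pi.single s 1, Pi.single s 1) : Pv N) = av s + bv s := by
      simp [av, bv]
    have hci : ((Pi.single i 1, Pi.single i 1) : Pv N) = av i + bv i := by
      simp [av, bv]
    rw [hcs, hci] at h0
    simp only [map_add, ContinuousLinearMap.add_apply] at h0
    have e1 : W2 G (x₀, x₀) (bv s) (bv i) = W2 G (x₀, x₀) (av s) (av i) := by
      have := symm2 hGW hsym (x₀, x₀) (bv s) (bv i)
      simpa [av, bv] using this
    have e2 : W2 G (x₀, x₀) (av s) (bv i) = W2 G (x₀, x₀) (bv s) (av i) := by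
      have := symm2 hGW hsym (x₀, x₀) (av s) (bv i)
      simpa [av, bv] using this
    rw [hm, hgm]
    linarith
  have hMneg : M = -gmat := by
    ext i s
    rw [Matrix.neg_apply, hMg i s]
  refine ⟨hMneg, ?_, ?_⟩
  · rw [hMneg, Matrix.det_neg]
    exact ((isUnit_one.neg).pow _).mul hgu
  · intro i k l
    have hMinv : M⁻¹ = -gmat⁻¹ := by
      rw [hMneg]
      apply Matrix.inv_eq_right_inv
      rw [Matrix.neg_mul, Matrix.mul_neg, neg_neg, Matrix.mul_nonsing_inv gmat hgu]
    have key : ∀ s, d2 (d1 (d1 G k) l) s x₀ x₀ =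
        -(1/2) * (pd (g k s) l x₀ + pd (g s l) k x₀ - pd (g l k) s x₀) := by
      intro s
      have hgf : ∀ a b : Fin N, g a b = fun y => W2 G (y, y) (av b) (av a) :=
        fun a b => funext fun y => by rw [hg a b y, rep11 hGW a b y y]
      rw [rep211 hGW k l s x₀ x₀, hgf k s, hgf s l, hgf l k,
        repdiag hGW (av s) (av k) l x₀, repdiag hGW (av l) (av s) k x₀,
        repdiag hGW (av k) (av l) s x₀]
      have hal : ((Pi.single l 1, Pi.single l 1) : Pv N) = av l + bv l := by simp [av, bv]
      have hak : ((Pi.single k 1, Pi.single k 1) : Pv N) = av k + bv k := by simp [av, bv]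
      have has : ((Pi.single s 1, Pi.single s 1) : Pv N) = av s + bv s := by simp [av, bv]
      rw [hal, hak, has]
      simp only [map_add, ContinuousLinearMap.add_apply]
      have hz := Z3 hGW hzero x₀ (Pi.single s 1) (Pi.single l 1) (Pi.single k 1)
      rw [has, hal, hak] at hz
      simp only [map_add, ContinuousLinearMap.add_apply] at hz
      -- permutation and swap identities
      have q1 : W3 G (x₀, x₀) (av l) (av s) (av k) = W3 G (x₀, x₀) (av s) (av l) (av k) :=
        sym3_12 hGW (x₀, x₀) (av l) (av s) (av k)
      have q2 : W3 G (x₀, x₀) (av k) (av l) (av s) = W3 G (x₀, x₀) (av s) (av l) (av k) := by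
        rw [sym3_23 hGW (x₀, x₀) (av k) (av l) (av s),
          sym3_12 hGW (x₀, x₀) (av k) (av s) (av l),
          sym3_23 hGW (x₀, x₀) (av s) (av k) (av l)]
      have q3 : W3 G (x₀, x₀) (av s) (av k) (av l) = W3 G (x₀, x₀) (av s) (av l) (av k) :=
        sym3_23 hGW (x₀, x₀) (av s) (av k) (av l)
      have q4 : W3 G (x₀, x₀) (bv k) (av l) (av s) = W3 G (x₀, x₀) (bv k) (av s) (av l) :=
        sym3_23 hGW (x₀, x₀) (bv k) (av l) (av s)
      have q5 : W3 G (x₀, x₀) (bv s) (av k) (av l) = W3 G (x₀, x₀) (bv s) (av l) (av k) :=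
        sym3_23 hGW (x₀, x₀) (bv s) (av k) (av l)
      have q6 : W3 G (x₀, x₀) (av s) (av l) (bv k) = W3 G (x₀, x₀) (bv k) (av s) (av l) := by
        rw [sym3_23 hGW (x₀, x₀) (av s) (av l) (bv k),
          sym3_12 hGW (x₀, x₀) (av s) (bv k) (av l)]
      have q7 : W3 G (x₀, x₀) (av s) (bv l) (av k) = W3 G (x₀, x₀) (bv l) (av s) (av k) :=
        sym3_12 hGW (x₀, x₀) (av s) (bv l) (av k)
      have q8 : W3 G (x₀, x₀) (av s) (bv l) (bv k) = W3 G (x₀, x₀) (bv s) (av l) (av k) := by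
        have := symm3 hGW hsym (x₀, x₀) (av s) (bv l) (bv k)
        simpa [av, bv] using this
      have q9 : W3 G (x₀, x₀) (bv s) (av l) (bv k) = W3 G (x₀, x₀) (av s) (bv l) (av k) := by
        have := symm3 hGW hsym (x₀, x₀) (bv s) (av l) (bv k)
        simpa [av, bv] using this
      have q10 : W3 G (x₀, x₀) (bv s) (bv l) (av k) = W3 G (x₀, x₀) (av s) (av l) (bv k) := by
        have := symm3 hGW hsym (x₀, x₀) (bv s) (bv l) (av k)
        simpa [av, bv] using this
      have q11 : W3 G (x₀, x₀) (bv s) (bv l) (bv k) = W3 G (x₀, x₀) (av s) (av l) (av k) := by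
        have := symm3 hGW hsym (x₀, x₀) (bv s) (bv l) (bv k)
        simpa [av, bv] using this
      linarith
    rw [hMinv, Finset.mul_sum]
    refine Finset.sum_congr rfl fun s _ => ?_
    rw [key s, Matrix.neg_apply]
    ring
end

section
/- Let V be a real inner product space (with positive-definite inner product ⟨·,·⟩ and squared norm x² := ⟨x,x⟩), let y ∈ V with y ≠ 0, set b := y/‖y‖, let α ≠ 0 be a real number, and define η(x) := α(2⟨x,y⟩(⟨b,y⟩ − ⟨b,x⟩) + ⟨b,x⟩·y² − ⟨b,y⟩·x²). Then the first-order tube equation ⟨x,y⟩² − x²·y² = η(x)² has only the solutions x = 0 and x = y; that is, in a properly Euclidean Σ-space with world function Σ(x,x′) = α⟨b, x−x′⟩·‖x−x′‖² + ½‖x−x′‖² the neutral first-order tube through 0 and y degenerates to the set of its two basic points. -/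
/-!
By Cauchy–Schwarz the left-hand side `⟨x,y⟩² − x²y²` of the tube equation is `≤ 0`, while its
right-hand side `η(x)²` is `≥ 0`; so a solution makes both vanish. The equality case of
Cauchy–Schwarz puts `x = r • y` on the line through `0` and `y`, and there
`η(r • y) = 3α⟨b,y⟩y² · r(1 − r)` with `⟨b,y⟩ = ‖y‖ ≠ 0`, which vanishes only for `r = 0, 1`.
-/

open RealInnerProductSpace

section

variable {F : Type*} [NormedAddCommGroup F] [InnerProductSpace ℝ F]

theorem real_inner_sq_eq_inner_self_mul_iff {x y : F} (hy : y ≠ 0) :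
    ⟪x, y⟫ ^ 2 = ⟪x, x⟫ * ⟪y, y⟫ ↔ ∃ r : ℝ, x = r • y := by
  have hsq : ⟪x, y⟫ ^ 2 = ‖⟪y, x⟫‖ ^ 2 := by
    rw [Real.norm_eq_abs, sq_abs, real_inner_comm]
  have hnorm : ⟪x, x⟫ * ⟪y, y⟫ = (‖y‖ * ‖x‖) ^ 2 := by
    rw [real_inner_self_eq_norm_sq, real_inner_self_eq_norm_sq]; ring
  rw [hsq, hnorm, sq_eq_sq₀ (norm_nonneg _) (by positivity)]
  exact ((norm_inner_eq_norm_tfae ℝ y x).out 0 2).trans (or_iff_right hy)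

theorem tube_eta_smul (b y : F) (α r : ℝ) :
    α * (2 * ⟪r • y, y⟫ * (⟪b, y⟫ - ⟪b, r • y⟫) + ⟪b, r • y⟫ * ⟪y, y⟫
      - ⟪b, y⟫ * ⟪r • y, r • y⟫) = 3 * α * ⟪b, y⟫ * ⟪y, y⟫ * (r * (1 - r)) := by
  simp only [real_inner_smul_left, real_inner_smul_right]
  ring

end

theorem eq_sq_iff_of_nonpos {a c : ℝ} (ha : a ≤ 0) : a = c ^ 2 ↔ a = 0 ∧ c = 0 := by
  constructor
  · intro h
    have hc : c ^ 2 = 0 := le_antisymm (h ▸ ha) (sq_nonneg c)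
    exact ⟨h.trans hc, pow_eq_zero_iff two_ne_zero |>.1 hc⟩
  · rintro ⟨rfl, rfl⟩
    simp

/-- in a properly Euclidean Σ-space with world function
`Σ(x,x′) = α⟨b, x−x′⟩‖x−x′‖² + ½‖x−x′‖²` (with `b = y/‖y‖`, `α ≠ 0`), the
neutral first-order tube equation `⟨x,y⟩² − x²y² = η(x)²` through the points
`0` and `y ≠ 0` has only the solutions `x = 0` and `x = y`: the tube
degenerates to the set of its two basic points. -/
theorem first_order_tube_degenerates_to_basic_points
    {V : Type*} [NormedAddCommGroup V] [InnerProductSpace ℝ V]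
    (y : V) (hy : y ≠ 0) (α : ℝ) (hα : α ≠ 0)
    (b : V) (hb : b = ‖y‖⁻¹ • y)
    (η : V → ℝ)
    (hη : ∀ x : V, η x = α * (2 * (inner ℝ x y : ℝ) *
        ((inner ℝ b y : ℝ) - (inner ℝ b x : ℝ))
      + (inner ℝ b x : ℝ) * (inner ℝ y y : ℝ)
      - (inner ℝ b y : ℝ) * (inner ℝ x x : ℝ))) :
    ∀ x : V,
      (inner ℝ x y : ℝ) ^ 2 - (inner ℝ x x : ℝ) * (inner ℝ y y : ℝ) = (η x) ^ 2 ↔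
        x = 0 ∨ x = y := by
  have hby : ⟪b, y⟫ ≠ 0 := by
    rw [hb, real_inner_smul_left, real_inner_self_eq_norm_sq]
    simp [hy]
  have hline : ∀ r : ℝ, η (r • y) = 0 ↔ r = 0 ∨ r = 1 := by
    intro r
    rw [hη, tube_eta_smul]
    simp [hα, hby, hy, sub_eq_zero, eq_comm (a := (1 : ℝ))]
  intro x
  have hCS : ⟪x, y⟫ ^ 2 - ⟪x, x⟫ * ⟪y, y⟫ ≤ 0 := by
    rw [sub_nonpos, sq]
    exact real_inner_mul_inner_self_le x y
  rw [eq_sq_iff_of_nonpos hCS, sub_eq_zero, real_inner_sq_eq_inner_self_mul_iff hy]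
  constructor
  · rintro ⟨⟨r, rfl⟩, h⟩
    rcases (hline r).1 h with rfl | rfl <;> simp
  · rintro (rfl | h)
    · exact ⟨⟨0, (zero_smul ℝ y).symm⟩, by simpa using (hline 0).2 (Or.inl rfl)⟩
    · rw [h]
      exact ⟨⟨1, (one_smul ℝ y).symm⟩, by simpa using (hline 1).2 (Or.inr rfl)⟩
end
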